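/- arXiv:2604.23238 — 4 statements merged into one kernel-verified Lean document; each statement's English description precedes it below -/
import Mathlib

section
/- For every integer V ≥ 1, every logit vector z : Fin V → ℝ, and every perturbation vector ε : Fin V → ℝ, the Kullback–Leibler divergence of the perturbed softmax from the original softmax satisfies D_KL(softmax(z + ε) ‖ softmax(z)) ≤ ‖ε‖₂² / 2, where ‖ε‖₂² = Σ_v ε_v². -/
/-- The softmax distribution of a logit vector `z : Fin V → ℝ`. -/
noncomputable def softmax {V : ℕ} (z : Fin V → ℝ) : Fin V → ℝ :=
  fun v => Real.exp (z v) / ∑ w, Real.exp (z w)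

/-- Kullback–Leibler divergence between two finitely supported distributions. -/
noncomputable def klDiv {V : ℕ} (P Q : Fin V → ℝ) : ℝ :=
  ∑ v, P v * Real.log (P v / Q v)

/-- For every `V ≥ 1` and all `z ε : Fin V → ℝ`,
`D_KL(softmax (z + ε) ‖ softmax z) ≤ ‖ε‖₂² / 2`. -/
theorem kl_softmax_perturb_le_half_sq_norm
    (V : ℕ) (hV : 1 ≤ V) (z ε : Fin V → ℝ) :
    klDiv (softmax (z + ε)) (softmax z) ≤ (∑ v, (ε v) ^ 2) / 2 := by
  haveI : NeZero V := ⟨by omega⟩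
  set C : ℝ := ∑ v, (ε v) ^ 2 with hC
  set S : ℝ → ℝ := fun t => ∑ w, Real.exp (z w + t * ε w) with hSdef
  set T : ℝ → ℝ := fun t => ∑ w, ε w * Real.exp (z w + t * ε w) with hTdef
  set U : ℝ → ℝ := fun t => ∑ w, (ε w) ^ 2 * Real.exp (z w + t * ε w) with hUdef
  have hSpos : ∀ t, 0 < S t := fun t =>
    Finset.sum_pos (fun w _ => Real.exp_pos _) Finset.univ_nonempty
  have hCnn : 0 ≤ C := Finset.sum_nonneg fun v _ => sq_nonneg _
  -- derivative of the inner exponentials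
  have hexp : ∀ (w : Fin V) (t : ℝ),
      HasDerivAt (fun t => Real.exp (z w + t * ε w)) (Real.exp (z w + t * ε w) * ε w) t := by
    intro w t
    have h1 : HasDerivAt (fun t : ℝ => z w + t * ε w) (ε w) t := by
      simpa using ((hasDerivAt_mul_const (ε w)).const_add (z w))
    exact h1.exp
  have hS' : ∀ t, HasDerivAt S (T t) t := by
    intro t
    have := HasDerivAt.fun_sum (u := Finset.univ)
      (A := fun w t => Real.exp (z w + t * ε w))
      (A' := fun w => Real.exp (z w + t * ε w) * ε w) (fun w _ => hexp w t)
    simpa [hTdef, mul_comm] using this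
  have hT' : ∀ t, HasDerivAt T (U t) t := by
    intro t
    have := HasDerivAt.fun_sum (u := Finset.univ)
      (A := fun w t => ε w * Real.exp (z w + t * ε w))
      (A' := fun w => ε w * (Real.exp (z w + t * ε w) * ε w))
      (fun w _ => (hexp w t).const_mul (ε w))
    have heq : ∀ w : Fin V, ε w * (Real.exp (z w + t * ε w) * ε w)
        = (ε w) ^ 2 * Real.exp (z w + t * ε w) := by intro w; ring
    simpa [hUdef, heq] using this
  -- second derivative of log S is bounded by C
  have hkey : ∀ t, (U t * S t - T t * T t) / (S t) ^ 2 ≤ C := by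
    intro t
    have hUle : U t ≤ C * S t := by
      rw [hUdef, hC, Finset.sum_mul]
      refine Finset.sum_le_sum fun w _ => ?_
      have : Real.exp (z w + t * ε w) ≤ S t :=
        Finset.single_le_sum (f := fun w => Real.exp (z w + t * ε w))
          (fun w _ => (Real.exp_pos _).le) (Finset.mem_univ w)
      exact mul_le_mul_of_nonneg_left this (sq_nonneg _)
    have h1 : U t * S t - T t * T t ≤ C * (S t) ^ 2 := by
      have : U t * S t ≤ C * S t * S t :=
        mul_le_mul_of_nonneg_right hUle (hSpos t).le
      nlinarith [sq_nonneg (T t)]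
    rw [div_le_iff₀ (by positivity)]
    linarith
  -- g is the derivative of h below
  set g : ℝ → ℝ := fun t => T t / S t - T 1 / S 1 - C * (t - 1) with hgdef
  have hg' : ∀ t, HasDerivAt g ((U t * S t - T t * T t) / (S t) ^ 2 - C) t := by
    intro t
    have hdiv : HasDerivAt (fun t => T t / S t) ((U t * S t - T t * T t) / (S t) ^ 2) t :=
      (hT' t).div (hS' t) (hSpos t).ne'
    have hlin : HasDerivAt (fun t : ℝ => C * (t - 1)) C t := by
      simpa using ((hasDerivAt_id t).sub_const 1).const_mul C
    simpa [hgdef] using (hdiv.sub_const (T 1 / S 1)).fun_sub hlin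
  have hganti : Antitone g :=
    antitone_of_hasDerivAt_nonpos hg' (fun t => by simpa using sub_nonpos.mpr (hkey t))
  have hg1 : g 1 = 0 := by simp [hgdef]
  -- h : the Bregman-gap function
  set h : ℝ → ℝ := fun t =>
    Real.log (S t) - Real.log (S 1) - (t - 1) * (T 1 / S 1) - (t - 1) ^ 2 * (C / 2) with hhdef
  have hh' : ∀ t, HasDerivAt h (g t) t := by
    intro t
    have hlogS : HasDerivAt (fun t => Real.log (S t)) (T t / S t) t := (hS' t).log (hSpos t).ne'
    have hlin : HasDerivAt (fun t : ℝ => (t - 1) * (T 1 / S 1)) (T 1 / S 1) t := by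
      simpa using ((hasDerivAt_id t).sub_const 1).mul_const (T 1 / S 1)
    have hsq : HasDerivAt (fun t : ℝ => (t - 1) ^ 2 * (C / 2)) ((2 * (t - 1)) * (C / 2)) t := by
      have := (((hasDerivAt_id t).sub_const 1).pow 2).mul_const (C / 2)
      simpa using this
    have := ((hlogS.sub_const (Real.log (S 1))).fun_sub hlin).fun_sub hsq
    have heq : T t / S t - T 1 / S 1 - 2 * (t - 1) * (C / 2) = g t := by
      rw [hgdef]; ring
    simpa [heq] using this
  have hh1 : h 1 = 0 := by simp [hhdef]
  -- h is monotone on (-∞, 1], hence h 0 ≤ h 1 = 0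
  have hmono : MonotoneOn h (Set.Iic 1) := by
    refine monotoneOn_of_hasDerivWithinAt_nonneg (convex_Iic 1)
      (fun x _ => (hh' x).continuousAt.continuousWithinAt)
      (fun x _ => (hh' x).hasDerivWithinAt) ?_
    intro x hx
    rw [interior_Iic] at hx
    have := hganti (le_of_lt hx)
    rw [hg1] at this
    exact this
  have hh0 : h 0 ≤ 0 := by
    have := hmono (Set.mem_Iic.mpr (by norm_num)) (Set.mem_Iic.mpr le_rfl) zero_le_one
    rwa [hh1] at this
  -- identify the KL divergence
  have hS1 : (∑ w, Real.exp ((z + ε) w)) = S 1 := by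
    simp [hSdef]
  have hS0 : (∑ w, Real.exp (z w)) = S 0 := by
    simp [hSdef]
  have hlog : ∀ v : Fin V,
      Real.log ((Real.exp ((z + ε) v) / S 1) / (Real.exp (z v) / S 0))
        = ε v + (Real.log (S 0) - Real.log (S 1)) := by
    intro v
    rw [Real.log_div (ne_of_gt (div_pos (Real.exp_pos _) (hSpos 1))) (ne_of_gt (div_pos (Real.exp_pos _) (hSpos 0))),
      Real.log_div (Real.exp_ne_zero _) (hSpos 1).ne',
      Real.log_div (Real.exp_ne_zero _) (hSpos 0).ne',
      Real.log_exp, Real.log_exp]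
    simp [Pi.add_apply]
    ring
  have hkl : klDiv (softmax (z + ε)) (softmax z)
      = T 1 / S 1 + (Real.log (S 0) - Real.log (S 1)) := by
    unfold klDiv softmax
    rw [hS1, hS0]
    calc (∑ v, Real.exp ((z + ε) v) / S 1 *
            Real.log ((Real.exp ((z + ε) v) / S 1) / (Real.exp (z v) / S 0)))
        = ∑ v, (ε v * Real.exp (z v + 1 * ε v) / S 1
            + Real.exp (z v + 1 * ε v) / S 1 * (Real.log (S 0) - Real.log (S 1))) := by
          refine Finset.sum_congr rfl fun v _ => ?_
          rw [hlog v]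
          simp [Pi.add_apply]
          ring
      _ = T 1 / S 1 + (Real.log (S 0) - Real.log (S 1)) := by
          rw [Finset.sum_add_distrib, ← Finset.sum_div, ← Finset.sum_mul, ← Finset.sum_div]
          rw [hTdef, hSdef]
          rw [div_self (hSpos 1).ne']
          simp
  -- conclude
  have : h 0 = Real.log (S 0) - Real.log (S 1) + T 1 / S 1 - C / 2 := by
    rw [hhdef]; ring
  rw [this] at hh0
  rw [hkl]
  linarith
end

section
/- Let V ≥ 1, let z : Fin V → ℝ be a fixed logit vector, and let ε be a random vector in Fin V → ℝ (on a probability space Ω) such that E[‖ε‖₂²] = σ². Then the expected Kullback–Leibler divergence of the perturbed softmax from the original softmax satisfies E[D_KL(softmax(z + ε) ‖ softmax(z))] ≤ σ² / 2. -/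
open MeasureTheory

lemma key_lemma {V : ℕ} (hV : 1 ≤ V) (z e : Fin V → ℝ) :
    klDiv (softmax (z + e)) (softmax z) ≤ (∑ v, e v ^ 2) / 2 := by
  have hne : Nonempty (Fin V) := ⟨⟨0, hV⟩⟩
  set M := ∑ v, e v ^ 2 with hM
  set S : ℝ → ℝ := fun t => ∑ w, Real.exp (z w + t * e w) with hS
  set N : ℝ → ℝ := fun t => ∑ w, e w * Real.exp (z w + t * e w) with hN
  set N2 : ℝ → ℝ := fun t => ∑ w, e w ^ 2 * Real.exp (z w + t * e w) with hN2
  have hSpos : ∀ t, 0 < S t := fun t =>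
    Finset.sum_pos (fun w _ => Real.exp_pos _) Finset.univ_nonempty
  have hlin : ∀ (w : Fin V) (t : ℝ), HasDerivAt (fun t => z w + t * e w) (e w) t := by
    intro w t
    simpa using ((hasDerivAt_id t).mul_const (e w)).const_add (z w)
  have hSd : ∀ t, HasDerivAt S (N t) t := by
    intro t
    apply HasDerivAt.fun_sum
    intro w _
    simpa [mul_comm] using ((hlin w t).exp)
  have hNd : ∀ t, HasDerivAt N (N2 t) t := by
    intro t
    apply HasDerivAt.fun_sum
    intro w _
    have := ((hlin w t).exp).const_mul (e w)
    simpa [mul_comm, mul_assoc, pow_two, mul_left_comm] using this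
  set L : ℝ → ℝ := fun t => Real.log (S t) with hL
  have hLd : ∀ t, HasDerivAt L (N t / S t) t := fun t => (hSd t).log (hSpos t).ne'
  set φ : ℝ → ℝ := fun t => N t / S t - M * t with hφ
  set g : ℝ → ℝ := fun t => L t - M / 2 * t ^ 2 with hg
  have hgd : ∀ t, HasDerivAt g (φ t) t := by
    intro t
    have h1 : HasDerivAt (fun t : ℝ => M / 2 * t ^ 2) (M * t) t := by
      have h := (hasDerivAt_pow 2 t).const_mul (M / 2)
      refine h.congr_deriv ?_
      push_cast
      ring
    have := (hLd t).fun_sub h1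
    simpa [hφ] using this
  have hφd : ∀ t, HasDerivAt φ ((N2 t * S t - N t * N t) / (S t) ^ 2 - M) t := by
    intro t
    exact ((hNd t).div (hSd t) (hSpos t).ne').sub
      (by simpa using (hasDerivAt_id t).const_mul M)
  have hN2le : ∀ t, N2 t ≤ M * S t := by
    intro t
    calc N2 t ≤ ∑ w, e w ^ 2 * S t := by
          apply Finset.sum_le_sum
          intro w _
          exact mul_le_mul_of_nonneg_left
            (Finset.single_le_sum (f := fun w => Real.exp (z w + t * e w))
              (fun i _ => (Real.exp_pos _).le) (Finset.mem_univ w))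
            (sq_nonneg _)
      _ = M * S t := by rw [← Finset.sum_mul]
  have hderiv_nonpos : ∀ t, (N2 t * S t - N t * N t) / (S t) ^ 2 - M ≤ 0 := by
    intro t
    have hS2 : (0:ℝ) < (S t) ^ 2 := pow_pos (hSpos t) 2
    rw [sub_nonpos, div_le_iff₀ hS2]
    have : N2 t * S t ≤ M * S t * S t :=
      mul_le_mul_of_nonneg_right (hN2le t) (hSpos t).le
    nlinarith [sq_nonneg (N t)]
  have hanti : Antitone φ := by
    apply antitone_of_deriv_nonpos
    · exact fun t => (hφd t).differentiableAt
    · intro t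
      rw [(hφd t).deriv]
      exact hderiv_nonpos t
  -- MVT
  obtain ⟨c, hc, hceq⟩ := exists_hasDerivAt_eq_slope g φ (by norm_num : (0:ℝ) < 1)
    (fun t _ => (hgd t).differentiableAt.continuousAt.continuousWithinAt)
    (fun t _ => hgd t)
  have hc1 : φ c = g 1 - g 0 := by
    rw [hceq]; ring
  have hφ1 : φ 1 ≤ g 1 - g 0 := hc1 ▸ hanti hc.2.le
  -- unfold the bound: N 1 / S 1 - M ≤ L 1 - M/2 - L 0
  have hbound : N 1 / S 1 - L 1 + L 0 ≤ M / 2 := by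
    have h1 : φ 1 = N 1 / S 1 - M := by simp [hφ]
    have h2 : g 1 = L 1 - M / 2 := by simp [hg]
    have h3 : g 0 = L 0 := by simp [hg]
    rw [h1, h2, h3] at hφ1
    linarith
  -- identify klDiv with N 1 / S 1 - L 1 + L 0
  have hkl : klDiv (softmax (z + e)) (softmax z) = N 1 / S 1 - L 1 + L 0 := by
    have hS1 : (∑ w, Real.exp ((z + e) w)) = S 1 := by
      simp [hS]
    have hS0 : (∑ w, Real.exp (z w)) = S 0 := by
      simp [hS]
    unfold klDiv softmax
    rw [hS1, hS0]
    have hterm : ∀ v : Fin V, Real.exp ((z + e) v) / S 1 *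
        Real.log (Real.exp ((z + e) v) / S 1 / (Real.exp (z v) / S 0)) =
        Real.exp ((z + e) v) / S 1 * (e v - L 1 + L 0) := by
      intro v
      congr 1
      rw [Real.log_div (by positivity) (by positivity),
          Real.log_div (Real.exp_pos _).ne' (hSpos 1).ne',
          Real.log_div (Real.exp_pos _).ne' (hSpos 0).ne',
          Real.log_exp, Real.log_exp]
      simp only [hL, Pi.add_apply]
      ring
    rw [Finset.sum_congr rfl (fun v _ => hterm v)]
    have hsum1 : ∑ v, Real.exp ((z + e) v) / S 1 = 1 := by
      rw [← Finset.sum_div, hS1, div_self (hSpos 1).ne']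
    have hsumN : ∑ v, Real.exp ((z + e) v) / S 1 * e v = N 1 / S 1 := by
      rw [hN, Finset.sum_div]
      apply Finset.sum_congr rfl
      intro v _
      simp [Pi.add_apply]
      ring
    calc ∑ v, Real.exp ((z + e) v) / S 1 * (e v - L 1 + L 0)
        = (∑ v, Real.exp ((z + e) v) / S 1 * e v)
          + (- L 1 + L 0) * ∑ v, Real.exp ((z + e) v) / S 1 := by
          rw [Finset.mul_sum]
          rw [← Finset.sum_add_distrib]
          apply Finset.sum_congr rfl
          intro v _
          ring
      _ = N 1 / S 1 - L 1 + L 0 := by rw [hsum1, hsumN]; ring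
  rw [hkl]
  exact hbound

lemma kl_nonneg_lemma {V : ℕ} (hV : 1 ≤ V) (z e : Fin V → ℝ) :
    0 ≤ klDiv (softmax (z + e)) (softmax z) := by
  have hne : Nonempty (Fin V) := ⟨⟨0, hV⟩⟩
  have hS1 : (0:ℝ) < ∑ w, Real.exp ((z + e) w) :=
    Finset.sum_pos (fun w _ => Real.exp_pos _) Finset.univ_nonempty
  have hS0 : (0:ℝ) < ∑ w, Real.exp (z w) :=
    Finset.sum_pos (fun w _ => Real.exp_pos _) Finset.univ_nonempty
  have hp : ∀ v, 0 < softmax (z + e) v := fun v => div_pos (Real.exp_pos _) hS1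
  have hq : ∀ v, 0 < softmax z v := fun v => div_pos (Real.exp_pos _) hS0
  have hP1 : ∑ v, softmax (z + e) v = 1 := by
    unfold softmax; rw [← Finset.sum_div, div_self hS1.ne']
  have hQ1 : ∑ v, softmax z v = 1 := by
    unfold softmax; rw [← Finset.sum_div, div_self hS0.ne']
  have hterm : ∀ v : Fin V, softmax (z + e) v - softmax z v ≤
      softmax (z + e) v * Real.log (softmax (z + e) v / softmax z v) := by
    intro v
    have h := Real.log_le_sub_one_of_pos (div_pos (hq v) (hp v))
    have hlog : 1 - softmax z v / softmax (z + e) v ≤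
        Real.log (softmax (z + e) v / softmax z v) := by
      have h2 : Real.log (softmax z v / softmax (z + e) v)
          = - Real.log (softmax (z + e) v / softmax z v) := by
        rw [← Real.log_inv]
        congr 1
        field_simp
      rw [h2] at h
      linarith
    have := mul_le_mul_of_nonneg_left hlog (hp v).le
    calc softmax (z + e) v - softmax z v
        = softmax (z + e) v * (1 - softmax z v / softmax (z + e) v) := by
          rw [mul_sub, mul_one, mul_div_cancel₀ _ (hp v).ne']
      _ ≤ _ := this
  calc (0:ℝ) = (∑ v, softmax (z + e) v) - ∑ v, softmax z v := by rw [hP1, hQ1]; ring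
    _ = ∑ v, (softmax (z + e) v - softmax z v) := by rw [Finset.sum_sub_distrib]
    _ ≤ ∑ v, softmax (z + e) v * Real.log (softmax (z + e) v / softmax z v) :=
        Finset.sum_le_sum (fun v _ => hterm v)
    _ = klDiv (softmax (z + e)) (softmax z) := rfl

/-- if `ε` is a random vector with `E[‖ε‖₂²] = σ²`, then
`E[D_KL(softmax (z + ε) ‖ softmax z)] ≤ σ² / 2`. -/
theorem expected_kl_softmax_perturb_le_half_var
    (V : ℕ) (hV : 1 ≤ V) (z : Fin V → ℝ)
    {Ω : Type*} [MeasurableSpace Ω] (μ : Measure Ω) [IsProbabilityMeasure μ]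
    (ε : Ω → Fin V → ℝ) (hε : Measurable ε)
    (hInt : Integrable (fun ω => ∑ v, (ε ω v) ^ 2) μ)
    (σ2 : ℝ) (hσ2 : ∫ ω, (∑ v, (ε ω v) ^ 2) ∂μ = σ2) :
    ∫ ω, klDiv (softmax (z + ε ω)) (softmax z) ∂μ ≤ σ2 / 2 := by
  have hle : ∀ ω, klDiv (softmax (z + ε ω)) (softmax z) ≤ (∑ v, (ε ω v) ^ 2) / 2 :=
    fun ω => key_lemma hV z (ε ω)
  have hnn : ∀ ω, 0 ≤ klDiv (softmax (z + ε ω)) (softmax z) :=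
    fun ω => kl_nonneg_lemma hV z (ε ω)
  calc ∫ ω, klDiv (softmax (z + ε ω)) (softmax z) ∂μ
      ≤ ∫ ω, (∑ v, (ε ω v) ^ 2) / 2 ∂μ :=
        integral_mono_of_nonneg (Filter.Eventually.of_forall hnn)
          (hInt.div_const 2) (Filter.Eventually.of_forall hle)
    _ = σ2 / 2 := by rw [integral_div, hσ2]
end

section
/- Let V ≥ 1 and k ≥ 1, let z⁽¹⁾, …, z⁽ᵏ⁾ : Fin V → ℝ be fixed logit vectors, and let ε⁽¹⁾, …, ε⁽ᵏ⁾ be random vectors in Fin V → ℝ on a probability space Ω satisfying E[‖ε⁽ⁱ⁾‖₂²] ≤ σ² for every i. Then the sum of expected per-token Kullback–Leibler divergences satisfies Σ_{i=1}^{k} E[D_KL(softmax(z⁽ⁱ⁾ + ε⁽ⁱ⁾) ‖ softmax(z⁽ⁱ⁾))] ≤ k σ² / 2. -/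
open MeasureTheory

lemma kl_softmax_bounds {V : ℕ} (hV : 1 ≤ V) (z ε : Fin V → ℝ) :
    0 ≤ klDiv (softmax (z + ε)) (softmax z) ∧
    klDiv (softmax (z + ε)) (softmax z) ≤ (∑ v, ε v ^ 2) / 2 := by
  have hne : Nonempty (Fin V) := ⟨⟨0, hV⟩⟩
  set C : ℝ := ∑ v, ε v ^ 2 with hC
  set S : ℝ → ℝ := fun t => ∑ w, Real.exp (z w + t * ε w) with hSdef
  set S1 : ℝ → ℝ := fun t => ∑ w, ε w * Real.exp (z w + t * ε w) with hS1def
  set S2 : ℝ → ℝ := fun t => ∑ w, ε w ^ 2 * Real.exp (z w + t * ε w) with hS2def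
  have hSpos : ∀ t, 0 < S t := fun t =>
    Finset.sum_pos (fun w _ => Real.exp_pos _) Finset.univ_nonempty
  have hS : ∀ t, HasDerivAt S (S1 t) t := by
    intro t
    apply HasDerivAt.fun_sum
    intro w _
    have h1 : HasDerivAt (fun t : ℝ => z w + t * ε w) (ε w) t := by
      simpa using ((hasDerivAt_id t).mul_const (ε w)).const_add (z w)
    simpa [mul_comm] using h1.exp
  have hS1 : ∀ t, HasDerivAt S1 (S2 t) t := by
    intro t
    apply HasDerivAt.fun_sum
    intro w _
    have h1 : HasDerivAt (fun t : ℝ => z w + t * ε w) (ε w) t := by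
      simpa using ((hasDerivAt_id t).mul_const (ε w)).const_add (z w)
    have := (h1.exp).const_mul (ε w)
    refine this.congr_deriv ?_
    ring
  set D : ℝ → ℝ := fun t => (S2 t * S t - S1 t * S1 t) / S t ^ 2 with hDdef
  have hquot : ∀ t, HasDerivAt (fun t => S1 t / S t) (D t) t := fun t =>
    (hS1 t).div (hS t) (hSpos t).ne'
  have hA : ∀ t, HasDerivAt (fun t => Real.log (S t)) (S1 t / S t) t := fun t =>
    (hS t).log (hSpos t).ne'
  -- Cauchy–Schwarz : S1 t ^ 2 ≤ S2 t * S t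
  have hCS : ∀ t, S1 t * S1 t ≤ S2 t * S t := by
    intro t
    have := Finset.sum_mul_sq_le_sq_mul_sq Finset.univ
      (fun w => ε w * Real.sqrt (Real.exp (z w + t * ε w)))
      (fun w => Real.sqrt (Real.exp (z w + t * ε w)))
    have hsq : ∀ w : Fin V, Real.sqrt (Real.exp (z w + t * ε w)) *
        Real.sqrt (Real.exp (z w + t * ε w)) = Real.exp (z w + t * ε w) := fun w =>
      Real.mul_self_sqrt (Real.exp_nonneg _)
    calc S1 t * S1 t = (∑ w, (ε w * Real.sqrt (Real.exp (z w + t * ε w))) *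
          Real.sqrt (Real.exp (z w + t * ε w))) ^ 2 := by
          rw [← sq]; congr 1; apply Finset.sum_congr rfl; intro w _
          rw [mul_assoc, hsq w]
      _ ≤ (∑ w, (ε w * Real.sqrt (Real.exp (z w + t * ε w))) ^ 2) *
          ∑ w, Real.sqrt (Real.exp (z w + t * ε w)) ^ 2 := this
      _ = S2 t * S t := by
          congr 1 <;> apply Finset.sum_congr rfl <;> intro w _
          · rw [mul_pow, sq (Real.sqrt _), hsq w]
          · rw [sq (Real.sqrt _), hsq w]
  have hD_nonneg : ∀ t, 0 ≤ D t := fun t =>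
    div_nonneg (sub_nonneg.mpr (hCS t)) (sq_nonneg _)
  have hS2le : ∀ t, S2 t ≤ C * S t := by
    intro t
    rw [hC, Finset.sum_mul]
    apply Finset.sum_le_sum
    intro w _
    have hle : Real.exp (z w + t * ε w) ≤ S t :=
      Finset.single_le_sum (f := fun w => Real.exp (z w + t * ε w))
        (fun w _ => (Real.exp_pos _).le) (Finset.mem_univ w)
    exact mul_le_mul_of_nonneg_left hle (sq_nonneg _)
  have hD_le : ∀ t, D t ≤ C := by
    intro t
    rw [hDdef]
    rw [div_le_iff₀ (by positivity)]
    nlinarith [hCS t, hSpos t, hS2le t, sq_nonneg (S1 t)]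
  -- the function G with G 1 = KL, G 0 = 0
  set G : ℝ → ℝ := fun t => t * (S1 t / S t) - (Real.log (S t) - Real.log (S 0)) with hGdef
  have hG : ∀ t, HasDerivAt G (t * D t) t := by
    intro t
    have h1 := ((hasDerivAt_id t).mul (hquot t)).sub ((hA t).sub_const (Real.log (S 0)))
    refine h1.congr_deriv ?_
    simp
  set H : ℝ → ℝ := fun t => C * t ^ 2 / 2 - G t with hHdef
  have hH : ∀ t, HasDerivAt H (C * t - t * D t) t := by
    intro t
    have h2 : HasDerivAt (fun t : ℝ => C * t ^ 2 / 2) (C * t) t := by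
      have := ((hasDerivAt_pow 2 t).const_mul C).div_const 2
      refine this.congr_deriv ?_
      ring
    exact h2.sub (hG t)
  -- monotonicity on [0,1]
  have mono : ∀ (F : ℝ → ℝ) (F' : ℝ → ℝ), (∀ t, HasDerivAt F (F' t) t) →
      (∀ t ∈ Set.Ioo (0:ℝ) 1, 0 ≤ F' t) → F 0 ≤ F 1 := by
    intro F F' hF hF'
    have hmono : MonotoneOn F (Set.Icc 0 1) := by
      apply monotoneOn_of_deriv_nonneg (convex_Icc 0 1)
      · exact fun t _ => (hF t).continuousAt.continuousWithinAt
      · intro t ht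
        exact ((hF t).differentiableAt).differentiableWithinAt
      · intro t ht
        rw [interior_Icc] at ht
        rw [(hF t).deriv]
        exact hF' t ht
    exact hmono (Set.mem_Icc.mpr ⟨le_refl 0, zero_le_one⟩)
      (Set.mem_Icc.mpr ⟨zero_le_one, le_refl 1⟩) zero_le_one
  have hG0 : G 0 = 0 := by simp [hGdef]
  have hH0 : H 0 = 0 := by simp [hHdef, hG0]
  have hGmono : G 0 ≤ G 1 := by
    apply mono G (fun t => t * D t) hG
    intro t ht
    exact mul_nonneg ht.1.le (hD_nonneg t)
  have hHmono : H 0 ≤ H 1 := by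
    apply mono H (fun t => C * t - t * D t) hH
    intro t ht
    have : t * D t ≤ t * C := mul_le_mul_of_nonneg_left (hD_le t) ht.1.le
    nlinarith
  -- KL identity
  have hKL : klDiv (softmax (z + ε)) (softmax z) = G 1 := by
    have hP : ∀ v : Fin V, softmax (z + ε) v = Real.exp (z v + 1 * ε v) / S 1 := by
      intro v; simp [softmax, hSdef]
    have hQ : ∀ v : Fin V, softmax z v = Real.exp (z v + 0 * ε v) / S 0 := by
      intro v; simp [softmax, hSdef]
    have hlog : ∀ v : Fin V, Real.log (softmax (z + ε) v / softmax z v) =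
        ε v - (Real.log (S 1) - Real.log (S 0)) := by
      intro v
      rw [hP v, hQ v]
      rw [Real.log_div (div_pos (Real.exp_pos _) (hSpos 1)).ne'
          (div_pos (Real.exp_pos _) (hSpos 0)).ne',
        Real.log_div (Real.exp_ne_zero _) (hSpos 1).ne',
        Real.log_div (Real.exp_ne_zero _) (hSpos 0).ne', Real.log_exp, Real.log_exp]
      ring
    have hsum1 : ∑ v, softmax (z + ε) v = 1 := by
      simp only [hP]
      rw [← Finset.sum_div]
      exact div_self (hSpos 1).ne'
    have hsume : ∑ v, softmax (z + ε) v * ε v = S1 1 / S 1 := by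
      calc ∑ v, softmax (z + ε) v * ε v
          = ∑ v, (ε v * Real.exp (z v + 1 * ε v)) / S 1 := by
            apply Finset.sum_congr rfl; intro v _; rw [hP v]; ring
        _ = S1 1 / S 1 := by rw [← Finset.sum_div]
    rw [klDiv]
    calc ∑ v, softmax (z + ε) v * Real.log (softmax (z + ε) v / softmax z v)
        = ∑ v, softmax (z + ε) v * (ε v - (Real.log (S 1) - Real.log (S 0))) := by
          apply Finset.sum_congr rfl; intro v _; rw [hlog v]
      _ = (∑ v, softmax (z + ε) v * ε v) -
          (∑ v, softmax (z + ε) v) * (Real.log (S 1) - Real.log (S 0)) := by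
          rw [Finset.sum_mul]
          rw [← Finset.sum_sub_distrib]
          apply Finset.sum_congr rfl; intro v _; ring
      _ = G 1 := by rw [hsum1, hsume, hGdef]; ring
  constructor
  · rw [hKL, ← hG0]; exact hGmono
  · rw [hKL]
    have := hHmono
    rw [hH0, hHdef] at this
    simp only at this
    linarith

/-- for `k` perturbed tokens with `E[‖ε⁽ⁱ⁾‖₂²] ≤ σ²` each, the sum of
expected per-token KL divergences is at most `k σ² / 2`. -/
theorem sum_expected_kl_softmax_perturb_le
    (V k : ℕ) (hV : 1 ≤ V) (hk : 1 ≤ k)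
    (z : Fin k → Fin V → ℝ)
    {Ω : Type*} [MeasurableSpace Ω] (μ : Measure Ω) [IsProbabilityMeasure μ]
    (ε : Fin k → Ω → Fin V → ℝ) (hε : ∀ i, Measurable (ε i))
    (hInt : ∀ i, Integrable (fun ω => ∑ v, (ε i ω v) ^ 2) μ)
    (σ2 : ℝ) (hσ2 : ∀ i, ∫ ω, (∑ v, (ε i ω v) ^ 2) ∂μ ≤ σ2) :
    ∑ i, ∫ ω, klDiv (softmax (z i + ε i ω)) (softmax (z i)) ∂μ ≤ k * σ2 / 2 := by
  have key : ∀ i : Fin k, ∫ ω, klDiv (softmax (z i + ε i ω)) (softmax (z i)) ∂μ ≤ σ2 / 2 := by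
    intro i
    have h1 : ∫ ω, klDiv (softmax (z i + ε i ω)) (softmax (z i)) ∂μ
        ≤ ∫ ω, (∑ v, (ε i ω v) ^ 2) / 2 ∂μ := by
      apply integral_mono_of_nonneg
      · exact Filter.Eventually.of_forall fun ω => (kl_softmax_bounds hV (z i) (ε i ω)).1
      · exact (hInt i).div_const 2
      · exact Filter.Eventually.of_forall fun ω => (kl_softmax_bounds hV (z i) (ε i ω)).2
    have h2 : ∫ ω, (∑ v, (ε i ω v) ^ 2) / 2 ∂μ = (∫ ω, (∑ v, (ε i ω v) ^ 2) ∂μ) / 2 :=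
      integral_div 2 _
    linarith [hσ2 i]
  calc ∑ i, ∫ ω, klDiv (softmax (z i + ε i ω)) (softmax (z i)) ∂μ
      ≤ ∑ _i : Fin k, σ2 / 2 := Finset.sum_le_sum fun i _ => key i
    _ = k * σ2 / 2 := by
      rw [Finset.sum_const, Finset.card_univ, Fintype.card_fin, nsmul_eq_mul]; ring
end

section
/- For every V ≥ 1 and all z, ε : Fin V → ℝ, the Bregman divergence of the log-sum-exp function Φ(z) = log Σ_v exp(z_v) admits the integral representation Φ(z) − Φ(z + ε) + Σ_v softmax(z + ε)_v · ε_v = ∫₀¹ t · ( Σ_v P_t(v) · ε_v² − (Σ_v P_t(v) · ε_v)² ) dt, where P_t = softmax(z + t·ε). -/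
/-- The log-sum-exp function `Φ(z) = log Σ_v exp(z_v)`. -/
noncomputable def logSumExp {V : ℕ} (z : Fin V → ℝ) : ℝ :=
  Real.log (∑ v, Real.exp (z v))

/-!
Along the line `t ↦ z + t • ε`, log-sum-exp has first derivative the softmax mean of `ε` and
second derivative its softmax variance. The identity is Taylor's formula with integral
remainder, `f 0 = f 1 - f' 1 + ∫₀¹ t f''(t) dt`, for this function.
-/

open Real Finset

theorem integral_sub_mul_deriv_deriv_eq {f f' f'' : ℝ → ℝ} {a b : ℝ}
    (hf : ∀ t ∈ Set.uIcc a b, HasDerivAt f (f' t) t)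
    (hf' : ∀ t ∈ Set.uIcc a b, HasDerivAt f' (f'' t) t)
    (hf'' : IntervalIntegrable f'' MeasureTheory.volume a b) :
    ∫ t in a..b, (t - a) * f'' t = (b - a) * f' b - (f b - f a) := by
  have hG : ∀ t ∈ Set.uIcc a b,
      HasDerivAt (fun s => (s - a) * f' s - f s) ((t - a) * f'' t) t := fun t ht => by
    refine ((((hasDerivAt_id' t).sub_const a).fun_mul (hf' t ht)).fun_sub
      (hf t ht)).congr_deriv ?_
    ring
  rw [intervalIntegral.integral_eq_sub_of_hasDerivAt hG
    (hf''.continuousOn_mul (continuous_id.sub continuous_const).continuousOn)]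
  ring

theorem hasDerivAt_add_smul_apply {ι : Type*} (z ε : ι → ℝ) (v : ι) (t : ℝ) :
    HasDerivAt (fun s : ℝ => (z + s • ε) v) (ε v) t := by
  simpa using (hasDerivAt_mul_const (ε v)).const_add (z v)

section Softmax

variable {V : ℕ} [NeZero V]

theorem sum_exp_pos (z : Fin V → ℝ) : 0 < ∑ v, exp (z v) :=
  sum_pos (fun _ _ => exp_pos _) univ_nonempty

theorem softmax_eq_exp_sub_logSumExp (z : Fin V → ℝ) (v : Fin V) :
    softmax z v = exp (z v - logSumExp z) := by
  rw [exp_sub, logSumExp, exp_log (sum_exp_pos z), softmax]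

theorem hasDerivAt_logSumExp_add_smul (z ε : Fin V → ℝ) (t : ℝ) :
    HasDerivAt (fun s : ℝ => logSumExp (z + s • ε))
      (∑ v, softmax (z + t • ε) v * ε v) t := by
  have hsum : HasDerivAt (fun s : ℝ => ∑ v, exp ((z + s • ε) v))
      (∑ v, exp ((z + t • ε) v) * ε v) t :=
    HasDerivAt.fun_sum fun v _ => (hasDerivAt_add_smul_apply z ε v t).exp
  refine (hsum.log (sum_exp_pos _).ne').congr_deriv ?_
  simp only [sum_div, softmax, div_mul_eq_mul_div]

theorem hasDerivAt_softmax_add_smul (z ε : Fin V → ℝ) (v : Fin V) (t : ℝ) :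
    HasDerivAt (fun s : ℝ => softmax (z + s • ε) v)
      (softmax (z + t • ε) v * (ε v - ∑ w, softmax (z + t • ε) w * ε w)) t := by
  have hexp : (fun s : ℝ => softmax (z + s • ε) v) =
      fun s => exp ((z + s • ε) v - logSumExp (z + s • ε)) :=
    funext fun s => softmax_eq_exp_sub_logSumExp _ v
  rw [hexp, softmax_eq_exp_sub_logSumExp]
  exact ((hasDerivAt_add_smul_apply z ε v t).fun_sub
    (hasDerivAt_logSumExp_add_smul z ε t)).exp

theorem hasDerivAt_softmax_mean_add_smul (z ε : Fin V → ℝ) (t : ℝ) :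
    HasDerivAt (fun s : ℝ => ∑ v, softmax (z + s • ε) v * ε v)
      (∑ v, softmax (z + t • ε) v * ε v ^ 2 - (∑ v, softmax (z + t • ε) v * ε v) ^ 2) t := by
  refine (HasDerivAt.fun_sum fun v _ =>
    (hasDerivAt_softmax_add_smul z ε v t).mul_const (ε v)).congr_deriv ?_
  set p := softmax (z + t • ε)
  set m := ∑ w, p w * ε w
  have hterm : ∀ v, p v * (ε v - m) * ε v = p v * ε v ^ 2 - p v * ε v * m :=
    fun v => by ring
  rw [sum_congr rfl fun v _ => hterm v, sum_sub_distrib, ← sum_mul, sq m]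

theorem continuous_softmax_variance_add_smul (z ε : Fin V → ℝ) :
    Continuous fun t : ℝ =>
      ∑ v, softmax (z + t • ε) v * ε v ^ 2 - (∑ v, softmax (z + t • ε) v * ε v) ^ 2 := by
  have hp : ∀ v, Continuous fun t : ℝ => softmax (z + t • ε) v := fun v =>
    continuous_iff_continuousAt.2 fun t => (hasDerivAt_softmax_add_smul z ε v t).continuousAt
  fun_prop

end Softmax

/-- integral representation of the Bregman divergence of log-sum-exp:
`Φ(z) − Φ(z + ε) + Σ_v softmax(z + ε)_v ε_v
  = ∫₀¹ t (Σ_v P_t(v) ε_v² − (Σ_v P_t(v) ε_v)²) dt`, where `P_t = softmax (z + t ε)`. -/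
theorem bregman_logSumExp_integral_repr
    (V : ℕ) (hV : 1 ≤ V) (z ε : Fin V → ℝ) :
    logSumExp z - logSumExp (z + ε) + ∑ v, softmax (z + ε) v * ε v
      = ∫ t in (0:ℝ)..1,
          t * ((∑ v, softmax (z + t • ε) v * (ε v) ^ 2)
            - (∑ v, softmax (z + t • ε) v * ε v) ^ 2) := by
  have : NeZero V := ⟨by omega⟩
  have taylor := integral_sub_mul_deriv_deriv_eq
    (fun t _ => hasDerivAt_logSumExp_add_smul z ε t)
    (fun t _ => hasDerivAt_softmax_mean_add_smul z ε t)
    ((continuous_softmax_variance_add_smul z ε).intervalIntegrable 0 1)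
  simp only [sub_zero, one_mul, one_smul, zero_smul, add_zero] at taylor
  rw [taylor]
  ring
end
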